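/- For every adaptive pure strategy f of Team 1 and every pair (i,j) ∈ {1,…,m}×{1,…,T}, the probability that players i and j meet during the T rounds — i.e., that (a_k, b_k) = (i,j) for some 1 ≤ k ≤ T — is at most 1/T. -/

import Mathlib

/-- The history of the first `k` rounds of the competition, when Team 1 plays the
adaptive pure strategy `f` and Team 2's (random) selections and the (random) match
outcomes are given by `b : ℕ → Fin T` and `c : ℕ → Bool`.  An entry `(a, b, c)`
records Team 1's selection, Team 2's selection and the outcome of one round. -/
def histUpTo (m T : ℕ) (f : List (Fin m × Fin T × Bool) → Fin m)
    (b : ℕ → Fin T) (c : ℕ → Bool) : ℕ → List (Fin m × Fin T × Bool)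
  | 0 => []
  | k + 1 =>
      histUpTo m T f b c k ++
        [(f (histUpTo m T f b c k), b k, c k)]

/-- Team 1's selection in round `k+1` (0-indexed round `k`). -/
def apick (m T : ℕ) (f : List (Fin m × Fin T × Bool) → Fin m)
    (b : ℕ → Fin T) (c : ℕ → Bool) (k : ℕ) : Fin m :=
  f (histUpTo m T f b c k)

/-- Extend a function on `Fin T` to `ℕ` (by periodicity); only the values on
`{0, …, T-1}` are ever used. -/
def natify {β : Type*} {T : ℕ} (hT : 0 < T) (g : Fin T → β) : ℕ → β :=
  fun k => g ⟨k % T, Nat.mod_lt _ hT⟩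

/-!
Let `r` be the number of Team 2 players still unused, with `j` among them, while `i` has not
played yet. First-step analysis over Team 2's uniformly random next pick shows that `i` meets
`j` with probability at most `1 / r`: if Team 1 fields `i` now, they meet with probability
exactly `1 / r`; otherwise `j` is used up now with probability `1 / r` (and the meeting becomes
impossible, since `j` never returns), and with probability `(r - 1) / r` we recurse with
`r - 1` players. Summed over the `r!` orders of the remaining players, the bound reads `(r - 1)!`.
Team 1 never fields `i` twice, so once `i` has played without meeting `j` the probability is `0`.
-/

open Finset

namespace TeamCompetition

variable {α β : Type*}

lemma sum_pi_fin_succ {M γ : Type*} [AddCommMonoid M] [Fintype γ] {n : ℕ}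
    (F : (Fin (n + 1) → γ) → M) :
    ∑ c, F c = ∑ c₀, ∑ c : Fin n → γ, F (Fin.cons c₀ c) := by
  rw [← Fintype.sum_prod_type']
  exact (Fintype.sum_equiv (Fin.consEquiv fun _ => γ) _ _ fun _ => rfl).symm

section Orderings

def orderings (s : Finset α) : Finset (List α) := ⟨s.val.lists, Multiset.lists_nodup_finset s⟩

variable {s : Finset α} {l : List α}

lemma mem_orderings : l ∈ orderings s ↔ s.val = l := by
  simp [orderings, Finset.mem_def]

lemma mem_orderings_iff_nodup : l ∈ orderings s ↔ l.Nodup ∧ ∀ x, x ∈ l ↔ x ∈ s := by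
  rw [mem_orderings]
  refine ⟨fun h => ⟨Multiset.coe_nodup.1 (h ▸ s.nodup), fun x => by
    rw [← Multiset.mem_coe, ← h, Finset.mem_val]⟩, fun ⟨hl, hx⟩ =>
    (Multiset.Nodup.ext s.nodup (Multiset.coe_nodup.2 hl)).2 fun x => (hx x).symm⟩

lemma nodup_of_mem_orderings (hl : l ∈ orderings s) : l.Nodup :=
  (mem_orderings_iff_nodup.1 hl).1

lemma mem_of_mem_orderings (hl : l ∈ orderings s) {x : α} : x ∈ l ↔ x ∈ s :=
  (mem_orderings_iff_nodup.1 hl).2 x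

lemma length_of_mem_orderings (hl : l ∈ orderings s) : l.length = #s := by
  rw [← Multiset.coe_card, ← mem_orderings.1 hl, Finset.card_val]

lemma card_orderings (s : Finset α) : #(orderings s) = (#s).factorial := by
  rw [← s.length_toList, ← List.length_permutations, orderings, Finset.card_mk,
    ← Multiset.coe_card, ← Multiset.lists_coe, Finset.coe_toList]

lemma sum_perm_eq_sum_orderings {M : Type*} [AddCommMonoid M] {n : ℕ} (F : List (Fin n) → M) :
    ∑ σ : Equiv.Perm (Fin n), F (List.ofFn σ) = ∑ l ∈ orderings univ, F l := by
  refine sum_bij (fun σ _ => List.ofFn σ) (fun σ _ => ?_)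
    (fun σ _ τ _ h => Equiv.coe_inj.1 (List.ofFn_injective h)) (fun l hl => ?_) fun _ _ => rfl
  · exact mem_orderings_iff_nodup.2 ⟨List.nodup_ofFn.2 σ.injective,
      fun x => by simpa [List.mem_ofFn] using σ.surjective x⟩
  · have hlen : n = l.length := by simp [length_of_mem_orderings hl]
    refine ⟨(finCongr hlen).trans ((nodup_of_mem_orderings hl).getEquivOfForallMemList l
      fun x => (mem_of_mem_orderings hl).2 (mem_univ x)), mem_univ _, ?_⟩
    exact List.ext_getElem (by simp [hlen]) fun k _ _ => by simp

variable [DecidableEq α]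

lemma cons_mem_orderings {b : α} (hb : b ∈ s) (hl : l ∈ orderings (s.erase b)) :
    b :: l ∈ orderings s := by
  rw [mem_orderings] at hl ⊢
  rw [← Multiset.cons_coe, ← hl, Finset.erase_val, Multiset.cons_erase hb]

lemma sum_orderings_eq_sum_cons {M : Type*} [AddCommMonoid M] (hs : s.Nonempty)
    (F : List α → M) :
    ∑ l ∈ orderings s, F l = ∑ b ∈ s, ∑ l ∈ orderings (s.erase b), F (b :: l) := by
  have ne_nil : ∀ l ∈ orderings s, l ≠ [] := fun l hl hnil =>
    hs.card_pos.ne (by simpa [hnil] using length_of_mem_orderings hl)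
  rw [sum_sigma']
  refine (sum_bij' (fun x _ => x.1 :: x.2) (fun l hl => ⟨l.head (ne_nil l hl), l.tail⟩)
    (fun x hx => ?_) (fun l hl => ?_) (fun _ _ => rfl) (fun l hl => List.cons_head_tail _)
    fun _ _ => rfl).symm
  · rw [mem_sigma] at hx
    exact cons_mem_orderings hx.1 hx.2
  · obtain ⟨b, t, rfl⟩ := List.exists_cons_of_ne_nil (ne_nil l hl)
    have hs' := mem_orderings.1 hl
    refine mem_sigma.2 ⟨(mem_of_mem_orderings hl).1 List.mem_cons_self, mem_orderings.2 ?_⟩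
    simp [Finset.erase_val, hs']

end Orderings

section Rounds

variable (P : α → β → ℝ)

def roundWeight (x : α × β × Bool) : ℝ := if x.2.2 then P x.1 x.2.1 else 1 - P x.1 x.2.1

lemma roundWeight_nonneg (hP : ∀ a b, P a b ∈ Set.Icc (0 : ℝ) 1) (x : α × β × Bool) :
    0 ≤ roundWeight P x := by
  obtain ⟨h0, h1⟩ := hP x.1 x.2.1
  unfold roundWeight
  split_ifs <;> linarith

lemma sum_roundWeight (a : α) (b : β) : ∑ c : Bool, roundWeight P (a, b, c) = 1 := by
  simp [roundWeight]

def pathWeight (H : List (α × β × Bool)) : ℝ := (H.map (roundWeight P)).prod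

lemma pathWeight_cons (x : α × β × Bool) (H : List (α × β × Bool)) :
    pathWeight P (x :: H) = roundWeight P x * pathWeight P H := by
  simp [pathWeight]

variable [DecidableEq α] [DecidableEq β] (i : α) (j : β)

def meetWeight (H : List (α × β × Bool)) : ℝ :=
  if ∃ x ∈ H, x.1 = i ∧ x.2.1 = j then pathWeight P H else 0

lemma meetWeight_cons (x : α × β × Bool) (H : List (α × β × Bool)) :
    meetWeight P i j (x :: H) =
      roundWeight P x * if x.1 = i ∧ x.2.1 = j then pathWeight P H else meetWeight P i j H := by
  by_cases hx : x.1 = i ∧ x.2.1 = j <;> by_cases hH : ∃ y ∈ H, y.1 = i ∧ y.2.1 = j <;>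
    simp [meetWeight, pathWeight_cons, hx, hH]

lemma meetWeight_ofFn {n : ℕ} (g : Fin n → α × β × Bool) :
    meetWeight P i j (List.ofFn g) =
      if ∃ k, (g k).1 = i ∧ (g k).2.1 = j then ∏ k, roundWeight P (g k) else 0 := by
  simp [meetWeight, pathWeight, List.mem_ofFn, List.map_ofFn, List.prod_ofFn]

end Rounds

/-- Unlike `histUpTo`, this starts from an arbitrary history `h` and returns only the new
rounds, which is the form first-step analysis needs. -/
def play (f : List (α × β × Bool) → α) :
    List (α × β × Bool) → List β → List Bool → List (α × β × Bool)
  | h, b :: bs, c :: cs => (f h, b, c) :: play f (h ++ [(f h, b, c)]) bs cs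
  | _, _, _ => []

section Play

variable (f : List (α × β × Bool) → α)

lemma play_append_singleton (b : β) (c : Bool) :
    ∀ (h : List (α × β × Bool)) (bs : List β) (cs : List Bool), bs.length = cs.length →
      play f h (bs ++ [b]) (cs ++ [c]) = play f h bs cs ++ [(f (h ++ play f h bs cs), b, c)]
  | h, [], [], _ => by simp [play]
  | h, b' :: bs, c' :: cs, hl => by
    simp [play, play_append_singleton b c _ bs cs (by simpa using hl)]

variable (P : α → β → ℝ)

lemma sum_pathWeight_play :
    ∀ (h : List (α × β × Bool)) (bs : List β) {n : ℕ}, bs.length = n →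
      ∑ c : Fin n → Bool, pathWeight P (play f h bs (List.ofFn c)) = 1
  | h, [], 0, _ => by simp [play, pathWeight]
  | h, b :: bs, n + 1, hn => by
    simp only [sum_pi_fin_succ, List.ofFn_cons, play, pathWeight_cons, ← mul_sum,
      sum_pathWeight_play _ bs (Nat.succ.inj hn), mul_one, sum_roundWeight]

variable [DecidableEq α] [DecidableEq β] (i : α) (j : β)

/-- The probability that `i` meets `j` in the rounds still to come after the history `h`, when
Team 2's remaining selections are `bs` and the match outcomes are random. -/
def meetProb : List (α × β × Bool) → List β → ℝ
  | _, [] => 0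
  | h, b :: bs => ∑ c : Bool, roundWeight P (f h, b, c) *
      if f h = i ∧ b = j then 1 else meetProb (h ++ [(f h, b, c)]) bs

lemma sum_meetWeight_play :
    ∀ (h : List (α × β × Bool)) (bs : List β) {n : ℕ}, bs.length = n →
      ∑ c : Fin n → Bool, meetWeight P i j (play f h bs (List.ofFn c)) = meetProb f P i j h bs
  | h, [], 0, _ => by simp [play, meetWeight, meetProb]
  | h, b :: bs, n + 1, hn => by
    simp only [sum_pi_fin_succ, List.ofFn_cons, play, meetWeight_cons, ← mul_sum, meetProb]
    refine sum_congr rfl fun c _ => ?_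
    split_ifs
    · rw [sum_pathWeight_play f P _ bs (Nat.succ.inj hn)]
    · rw [sum_meetWeight_play _ bs (Nat.succ.inj hn)]

end Play

section MeetProb

variable [DecidableEq α] [DecidableEq β] {f : List (α × β × Bool) → α} {P : α → β → ℝ}
  {i : α} {j : β} {h : List (α × β × Bool)} {b : β} {bs : List β}

lemma meetProb_cons_of_not (hn : ¬(f h = i ∧ b = j)) :
    meetProb f P i j h (b :: bs) =
      ∑ c : Bool, roundWeight P (f h, b, c) * meetProb f P i j (h ++ [(f h, b, c)]) bs := by
  simp [meetProb, hn]

lemma meetProb_cons_of_eq (hfi : f h = i) : meetProb f P i j h (j :: bs) = 1 := by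
  simp only [meetProb, hfi, and_self, if_true, mul_one, sum_roundWeight]

lemma meetProb_eq_zero_of_not_mem :
    ∀ {h : List (α × β × Bool)} {bs : List β}, j ∉ bs → meetProb f P i j h bs = 0
  | _, [], _ => rfl
  | _, b :: bs, hj => by
    rw [List.mem_cons, not_or] at hj
    rw [meetProb_cons_of_not fun hc => hj.1 hc.2.symm]
    simp [meetProb_eq_zero_of_not_mem hj.2]

end MeetProb

def NodupPicks (h : List (α × β × Bool)) (bs : List β) : Prop :=
  (h.map fun x => x.1).Nodup ∧ (h.map (fun x => x.2.1) ++ bs).Nodup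

section Bound

variable [Fintype β]

def NeverRepeats (f : List (α × β × Bool) → α) : Prop :=
  ∀ h : List (α × β × Bool), h.length < Fintype.card β →
    (h.map fun x => x.1).Nodup → (h.map fun x => x.2.1).Nodup → f h ∉ h.map fun x => x.1

variable {f : List (α × β × Bool) → α} {h : List (α × β × Bool)} {b : β} {bs : List β}

lemma NodupPicks.fresh (hf : NeverRepeats f) (hh : NodupPicks h (b :: bs)) :
    f h ∉ h.map fun x => x.1 := by
  refine hf h ?_ hh.1 (List.nodup_append.1 hh.2).1
  have := hh.2.length_le_card
  simp only [List.length_append, List.length_map, List.length_cons] at this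
  omega

lemma NodupPicks.append (hf : NeverRepeats f) (hh : NodupPicks h (b :: bs)) (c : Bool) :
    NodupPicks (h ++ [(f h, b, c)]) bs := by
  refine ⟨?_, by simpa using hh.2⟩
  rw [List.map_append, List.map_singleton, ← List.concat_eq_append]
  exact hh.1.concat (hh.fresh hf)

variable [DecidableEq α] [DecidableEq β] {P : α → β → ℝ} {i : α} {j : β}

lemma meetProb_eq_zero_of_mem (hf : NeverRepeats f) :
    ∀ {h : List (α × β × Bool)} {bs : List β}, NodupPicks h bs → i ∈ h.map (fun x => x.1) →
      meetProb f P i j h bs = 0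
  | _, [], _, _ => rfl
  | _, b :: bs, hh, hi => by
    rw [meetProb_cons_of_not fun hc => hh.fresh hf (by rwa [hc.1])]
    simp [meetProb_eq_zero_of_mem hf (hh.append hf _) (by simp [hi])]

lemma sum_meetProb_orderings_of_eq (hf : NeverRepeats f) {s : Finset β}
    (hh : ∀ l ∈ orderings s, NodupPicks h l) (hj : j ∈ s) (hfi : f h = i) :
    ∑ l ∈ orderings s, meetProb f P i j h l = (#s - 1).factorial := by
  rw [sum_orderings_eq_sum_cons ⟨j, hj⟩, ← add_sum_erase s _ hj]
  have hrest :
      ∑ b ∈ s.erase j, ∑ l ∈ orderings (s.erase b), meetProb f P i j h (b :: l) = 0 := by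
    refine sum_eq_zero fun b hb => sum_eq_zero fun l hl => ?_
    rw [meetProb_cons_of_not fun hc => (ne_of_mem_erase hb) hc.2]
    refine sum_eq_zero fun c _ => ?_
    have hh' := (hh _ (cons_mem_orderings (mem_of_mem_erase hb) hl)).append hf c
    rw [meetProb_eq_zero_of_mem hf hh' (by simp [hfi]), mul_zero]
  simp [meetProb_cons_of_eq hfi, hrest, card_orderings, card_erase_of_mem hj]

theorem sum_meetProb_orderings_le (hP : ∀ a b, P a b ∈ Set.Icc (0 : ℝ) 1) (hf : NeverRepeats f)
    (s : Finset β) (h : List (α × β × Bool)) (hh : ∀ l ∈ orderings s, NodupPicks h l)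
    (hi : i ∉ h.map fun x => x.1) (hj : j ∈ s) :
    ∑ l ∈ orderings s, meetProb f P i j h l ≤ (#s - 1).factorial := by
  induction s using Finset.strongInduction generalizing h with
  | H s ih =>
  by_cases hfi : f h = i
  · exact (sum_meetProb_orderings_of_eq hf hh hj hfi).le
  rw [sum_orderings_eq_sum_cons ⟨j, hj⟩, ← add_sum_erase s _ hj]
  have hjterm : ∑ l ∈ orderings (s.erase j), meetProb f P i j h (j :: l) = 0 := by
    refine sum_eq_zero fun l hl => ?_
    rw [meetProb_cons_of_not fun hc => hfi hc.1]
    refine sum_eq_zero fun c _ => ?_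
    rw [meetProb_eq_zero_of_not_mem fun hjl => by simpa using (mem_of_mem_orderings hl).1 hjl,
      mul_zero]
  have hrest : ∀ b ∈ s.erase j,
      ∑ l ∈ orderings (s.erase b), meetProb f P i j h (b :: l) ≤ (#s - 1 - 1).factorial := by
    intro b hb
    obtain ⟨hbj, hbs⟩ := mem_erase.1 hb
    calc ∑ l ∈ orderings (s.erase b), meetProb f P i j h (b :: l)
        = ∑ c : Bool, roundWeight P (f h, b, c) *
            ∑ l ∈ orderings (s.erase b), meetProb f P i j (h ++ [(f h, b, c)]) l := by
          simp only [meetProb_cons_of_not fun hc : f h = i ∧ b = j => hfi hc.1, mul_sum]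
          exact sum_comm
      _ ≤ ∑ c : Bool, roundWeight P (f h, b, c) * (#s - 1 - 1).factorial := by
          gcongr with c
          · exact roundWeight_nonneg P hP _
          · rw [← card_erase_of_mem hbs]
            refine ih _ (erase_ssubset hbs) _
              (fun l hl => (hh _ (cons_mem_orderings hbs hl)).append hf c) ?_
              (mem_erase.2 ⟨Ne.symm hbj, hj⟩)
            simp [hi, Ne.symm hfi]
      _ = (#s - 1 - 1).factorial := by rw [← sum_mul, sum_roundWeight, one_mul]
  have hfact : (#s - 1) * (#s - 1 - 1).factorial ≤ (#s - 1).factorial := by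
    obtain h0 | h0 := eq_or_ne (#s - 1) 0
    · simp [h0]
    · rw [Nat.mul_factorial_pred h0]
  calc _ ≤ 0 + ∑ b ∈ s.erase j, ((#s - 1 - 1).factorial : ℝ) := by
        rw [hjterm]; gcongr with b hb; exact hrest b hb
    _ = ((#s - 1) * (#s - 1 - 1).factorial : ℕ) := by simp [card_erase_of_mem hj]
    _ ≤ (#s - 1).factorial := by exact_mod_cast hfact

end Bound

section Schedule

variable {m T : ℕ} (f : List (Fin m × Fin T × Bool) → Fin m) (b : ℕ → Fin T) (c : ℕ → Bool)

lemma histUpTo_eq_ofFn (n : ℕ) :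
    histUpTo m T f b c n = List.ofFn fun k : Fin n => (apick m T f b c k, b k, c k) := by
  induction n with
  | zero => rfl
  | succ n ih =>
    rw [List.ofFn_succ', List.concat_eq_append]
    simp only [Fin.val_castSucc, Fin.val_last, ← ih]
    rfl

lemma histUpTo_eq_play (n : ℕ) :
    histUpTo m T f b c n =
      play f [] (List.ofFn fun k : Fin n => b k) (List.ofFn fun k : Fin n => c k) := by
  induction n with
  | zero => rfl
  | succ n ih =>
    rw [List.ofFn_succ', List.ofFn_succ', List.concat_eq_append, List.concat_eq_append,
      play_append_singleton _ _ _ _ _ _ (by simp)]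
    simp only [Fin.val_castSucc, Fin.val_last, ← ih, List.nil_append]
    rfl

lemma natify_val (hT : 0 < T) {γ : Type*} (g : Fin T → γ) (k : Fin T) : natify hT g k = g k := by
  simp [natify, Nat.mod_eq_of_lt k.isLt]

lemma play_ofFn (hT : 0 < T) (β : Fin T → Fin T) (c : Fin T → Bool) :
    play f [] (List.ofFn β) (List.ofFn c) =
      List.ofFn fun k : Fin T => (apick m T f (natify hT β) (natify hT c) k, β k, c k) := by
  have h := histUpTo_eq_play f (natify hT β) (natify hT c) T
  simp only [natify_val] at h
  rw [← h, histUpTo_eq_ofFn]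
  simp [natify_val]

end Schedule

end TeamCompetition

open TeamCompetition

theorem meeting_prob_le_general (m T : ℕ) (hT : 0 < T)
    (P : Fin m → Fin T → ℝ) (hP : ∀ i j, P i j ∈ Set.Icc (0 : ℝ) 1)
    (f : List (Fin m × Fin T × Bool) → Fin m)
    (hf : ∀ h : List (Fin m × Fin T × Bool), h.length < T →
      (h.map fun x => x.1).Nodup → (h.map fun x => x.2.1).Nodup →
      f h ∉ h.map fun x => x.1)
    (i : Fin m) (j : Fin T) :
    ∑ β : Equiv.Perm (Fin T), ∑ c : Fin T → Bool,
      (if ∃ k : Fin T,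
            apick m T f (natify hT β) (natify hT c) k = i ∧ β k = j then
        (T.factorial : ℝ)⁻¹ *
          ∏ k : Fin T,
            (if c k then
              P (apick m T f (natify hT β) (natify hT c) k) (β k)
            else
              1 - P (apick m T f (natify hT β) (natify hT c) k) (β k))
      else 0) ≤ (T : ℝ)⁻¹ := by
  have hf' : NeverRepeats f := fun h hh => hf h (by simpa using hh)
  calc _ = (T.factorial : ℝ)⁻¹ * ∑ β : Equiv.Perm (Fin T), ∑ c : Fin T → Bool,
        meetWeight P i j (play f [] (List.ofFn β) (List.ofFn c)) := by
        simp only [mul_sum, play_ofFn f hT, meetWeight_ofFn, mul_ite, mul_zero]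
        rfl
    _ = (T.factorial : ℝ)⁻¹ * ∑ l ∈ orderings univ, meetProb f P i j [] l := by
        simp only [sum_meetWeight_play f P i j [] _ List.length_ofFn]
        rw [sum_perm_eq_sum_orderings (meetProb f P i j [])]
    _ ≤ (T.factorial : ℝ)⁻¹ * (T - 1).factorial := by
        gcongr
        simpa using sum_meetProb_orderings_le hP hf' univ [] (fun l hl => ⟨List.nodup_nil,
          by simpa using nodup_of_mem_orderings hl⟩) (by simp) (mem_univ j)
    _ = (T : ℝ)⁻¹ := by
        rw [← Nat.mul_factorial_pred hT.ne', Nat.cast_mul, mul_inv, mul_assoc,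
          inv_mul_cancel₀ (by positivity), mul_one]

/-- Suppose Team 2 (with exactly `n = T` players) selects its player
uniformly at random among the remaining ones in every round (encoded by a uniformly
random order `β` of its `T` players, each order having probability `1/T!`), while
Team 1 plays an arbitrary adaptive pure strategy `f` (which never reuses a player on
any valid history).  Then for every pair of players `(i, j)`, the probability that
`i` and `j` meet during the `T` rounds is at most `1/T`. -/
theorem meeting_prob_le (m T : ℕ) (hT : 0 < T) (hm : T ≤ m)
    (P : Fin m → Fin T → ℝ) (hP : ∀ i j, P i j ∈ Set.Icc (0 : ℝ) 1)
    (f : List (Fin m × Fin T × Bool) → Fin m)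
    (hf : ∀ h : List (Fin m × Fin T × Bool), h.length < T →
      (h.map fun x => x.1).Nodup → (h.map fun x => x.2.1).Nodup →
      f h ∉ h.map fun x => x.1)
    (i : Fin m) (j : Fin T) :
    ∑ β : Equiv.Perm (Fin T), ∑ c : Fin T → Bool,
      (if ∃ k : Fin T,
            apick m T f (natify hT β) (natify hT c) k = i ∧ β k = j then
        (T.factorial : ℝ)⁻¹ *
          ∏ k : Fin T,
            (if c k then
              P (apick m T f (natify hT β) (natify hT c) k) (β k)
            else
              1 - P (apick m T f (natify hT β) (natify hT c) k) (β k))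
      else 0) ≤ (T : ℝ)⁻¹ :=
  meeting_prob_le_general m T hT P hP f hf i j
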